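/- arXiv:0705.2932 — 3 statements merged into one kernel-verified Lean document; each statement's English description precedes it below -/
import Mathlib

section
/- For every natural number n, Σ_{λ ∈ P(n)} 2·ℓ(λ^d) = Σ_{λ ∈ P(n)} 2·ℓ(λ^e), where the sums run over all partitions λ of n. -/
/-- `s` is (the multiset of parts of) a partition of `n`: all parts are positive and sum to `n`. -/
def IsPartitionOf (n : ℕ) (s : Multiset ℕ) : Prop :=
  (∀ x ∈ s, 0 < x) ∧ s.sum = n

/-- `λ^r`: the part `i` occurs once if its multiplicity in `s` is odd, and not at all otherwise. -/
def rPart (s : Multiset ℕ) : Multiset ℕ :=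
  s.dedup.filter (fun i => Odd (s.count i))

/-- `λ^d`: the part `i` occurs `⌊m_i(λ)/2⌋` times (i.e. `(m_i-1)/2` if `m_i` odd, `m_i/2` if even). -/
def dPart (s : Multiset ℕ) : Multiset ℕ :=
  ∑ i ∈ s.toFinset, Multiset.replicate (s.count i / 2) i

/-- `λ^o`: the odd parts of `λ`. -/
def oPart (s : Multiset ℕ) : Multiset ℕ :=
  s.filter (fun x => Odd x)

/-- `λ^e`: the halves of the even parts of `λ`. -/
def ePart (s : Multiset ℕ) : Multiset ℕ :=
  (s.filter (fun x => Even x)).map (fun x => x / 2)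

/-- The `p`-Glaisher map: each part `x = p^a * q` (with `p ∤ q`) is replaced by `p^a` copies of `q`. -/
def glaisher (p : ℕ) (s : Multiset ℕ) : Multiset ℕ :=
  s.bind (fun x => Multiset.replicate (p ^ (Nat.factorization x p)) (x / p ^ (Nat.factorization x p)))

/-- `λ^{r(p)}`: the part `i` occurs `m_i(λ) mod p` times. -/
def rPartP (p : ℕ) (s : Multiset ℕ) : Multiset ℕ :=
  ∑ i ∈ s.toFinset, Multiset.replicate (s.count i % p) i

/-- `λ^{d(p)}`: the part `i` occurs `(m_i(λ) - (m_i(λ) mod p))/p` times. -/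
def dPartP (p : ℕ) (s : Multiset ℕ) : Multiset ℕ :=
  ∑ i ∈ s.toFinset, Multiset.replicate (s.count i / p) i

/-!
For a fixed `i > 0`, the map on partitions that replaces each pair of parts `i` by one part `2i`
and each part `2i` by two parts `i` (keeping a leftover odd `i`) is an involution exchanging
`⌊m_i / 2⌋` and `m_{2i}`. Hence `Σ_λ ⌊m_i(λ)/2⌋ = Σ_λ m_{2i}(λ)` for every `i`, and summing over `i`
gives `Σ_λ ℓ(λ^d) = Σ_λ ℓ(λ^e)`, because `m_i(λ^d) = ⌊m_i(λ)/2⌋` and `m_i(λ^e) = m_{2i}(λ)`.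
-/

open Multiset

lemma count_dPart (s : Multiset ℕ) (i : ℕ) : (dPart s).count i = s.count i / 2 := by
  rw [dPart, count_sum']
  simp only [count_replicate, Finset.sum_ite_eq', mem_toFinset]
  split_ifs with h
  · rfl
  · rw [count_eq_zero_of_notMem h, Nat.zero_div]

lemma count_ePart (s : Multiset ℕ) (i : ℕ) : (ePart s).count i = s.count (2 * i) := by
  rw [ePart, count_map, filter_filter, count_eq_card_filter_eq]
  congr 1
  refine filter_congr fun x _ => ?_
  constructor
  · rintro ⟨hi, ⟨k, rfl⟩⟩
    omega
  · rintro rfl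
    exact ⟨by omega, even_two_mul i⟩

lemma card_eq_sum_count_range {t : Multiset ℕ} {n : ℕ} (ht : ∀ x ∈ t, x ≤ n) :
    card t = ∑ i ∈ Finset.range (n + 1), t.count i :=
  (sum_count_eq_card fun x hx => Finset.mem_range_succ_iff.mpr (ht x hx)).symm

section MergeSplit

variable {i : ℕ}

def withCounts (i a b : ℕ) (s : Multiset ℕ) : Multiset ℕ :=
  s.filter (fun x => x ≠ i ∧ x ≠ 2 * i) + replicate a i + replicate b (2 * i)

lemma count_withCounts (hi : 0 < i) (a b : ℕ) (s : Multiset ℕ) (j : ℕ) :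
    (withCounts i a b s).count j =
      if j = i then a else if j = 2 * i then b else s.count j := by
  simp only [withCounts, count_add, count_filter, count_replicate]
  split_ifs <;> omega

lemma sum_withCounts (i a b : ℕ) (s : Multiset ℕ) :
    (withCounts i a b s).sum =
      (s.filter (fun x => x ≠ i ∧ x ≠ 2 * i)).sum + a * i + b * (2 * i) := by
  simp [withCounts]

lemma withCounts_count (hi : 0 < i) (s : Multiset ℕ) :
    withCounts i (s.count i) (s.count (2 * i)) s = s := by
  ext j
  rw [count_withCounts hi]
  split_ifs <;> simp_all

def mergeSplit (i : ℕ) (s : Multiset ℕ) : Multiset ℕ :=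
  withCounts i (2 * s.count (2 * i) + s.count i % 2) (s.count i / 2) s

lemma count_mergeSplit_two_mul (hi : 0 < i) (s : Multiset ℕ) :
    (mergeSplit i s).count (2 * i) = s.count i / 2 := by
  rw [mergeSplit, count_withCounts hi, if_neg (by omega), if_pos rfl]

lemma mergeSplit_involutive (hi : 0 < i) : Function.Involutive (mergeSplit i) := by
  intro s
  ext j
  simp only [mergeSplit, count_withCounts hi]
  split_ifs <;> subst_vars <;> omega

lemma sum_mergeSplit (hi : 0 < i) (s : Multiset ℕ) : (mergeSplit i s).sum = s.sum := by
  conv_rhs => rw [← withCounts_count hi s]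
  rw [mergeSplit, sum_withCounts, sum_withCounts]
  have := Nat.div_add_mod (s.count i) 2
  grind

lemma pos_of_mem_mergeSplit (hi : 0 < i) {s : Multiset ℕ} (hs : ∀ x ∈ s, 0 < x) {x : ℕ}
    (hx : x ∈ mergeSplit i s) : 0 < x := by
  simp only [mergeSplit, withCounts, mem_add, mem_filter] at hx
  rcases hx with (hx | hx) | hx
  · exact hs x hx.1
  · rw [eq_of_mem_replicate hx]; exact hi
  · rw [eq_of_mem_replicate hx]; omega

def Nat.Partition.mergeSplit {n : ℕ} (hi : 0 < i) (μ : n.Partition) : n.Partition where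
  parts := _root_.mergeSplit i μ.parts
  parts_pos hx := pos_of_mem_mergeSplit hi (fun _ => μ.parts_pos) hx
  parts_sum := by rw [sum_mergeSplit hi, μ.parts_sum]

lemma Nat.Partition.mergeSplit_involutive {n : ℕ} (hi : 0 < i) :
    Function.Involutive (Nat.Partition.mergeSplit (n := n) hi) :=
  fun μ => Nat.Partition.ext (_root_.mergeSplit_involutive hi μ.parts)

end MergeSplit

lemma sum_count_div_two_eq_sum_count_two_mul (n i : ℕ) :
    ∑ μ : n.Partition, μ.parts.count i / 2 = ∑ μ : n.Partition, μ.parts.count (2 * i) := by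
  rcases Nat.eq_zero_or_pos i with rfl | hi
  · simp [count_eq_zero_of_notMem fun h => (Nat.Partition.parts_pos _ h).false]
  · rw [← Equiv.sum_comp ((Nat.Partition.mergeSplit_involutive hi).toPerm _)
      fun μ : n.Partition => μ.parts.count (2 * i)]
    exact Finset.sum_congr rfl fun μ _ => (count_mergeSplit_two_mul hi μ.parts).symm

lemma dPart_le (s : Multiset ℕ) : dPart s ≤ s :=
  le_iff_count.mpr fun i => (count_dPart s i).trans_le (Nat.div_le_self _ _)

lemma le_of_mem_ePart {n : ℕ} {μ : n.Partition} {x : ℕ} (hx : x ∈ ePart μ.parts) : x ≤ n := by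
  obtain ⟨y, hy, rfl⟩ := mem_map.mp hx
  exact (Nat.div_le_self y 2).trans (μ.le_of_mem_parts (mem_of_mem_filter hy))

/-- `Σ_{λ ∈ P(n)} 2 ℓ(λ^d) = Σ_{λ ∈ P(n)} 2 ℓ(λ^e)`. -/
theorem stmt8 (n : ℕ) :
    ∑ μ : Nat.Partition n, 2 * (dPart μ.parts).card =
      ∑ μ : Nat.Partition n, 2 * (ePart μ.parts).card := by
  simp only [← Finset.mul_sum]
  congr 1
  calc ∑ μ : n.Partition, card (dPart μ.parts)
      = ∑ μ : n.Partition, ∑ i ∈ Finset.range (n + 1), μ.parts.count i / 2 := by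
        refine Finset.sum_congr rfl fun μ _ => ?_
        simp only [card_eq_sum_count_range fun x hx =>
          μ.le_of_mem_parts (mem_of_le (dPart_le _) hx), count_dPart]
    _ = ∑ μ : n.Partition, ∑ i ∈ Finset.range (n + 1), μ.parts.count (2 * i) := by
        rw [Finset.sum_comm, Finset.sum_comm (s := Finset.univ)]
        exact Finset.sum_congr rfl fun i _ => sum_count_div_two_eq_sum_count_two_mul n i
    _ = ∑ μ : n.Partition, card (ePart μ.parts) := by
        refine Finset.sum_congr rfl fun μ _ => ?_
        simp only [card_eq_sum_count_range fun x hx => le_of_mem_ePart hx, count_ePart]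
end

section
/- Let p be a prime number and n a natural number. The p-Glaisher map, which sends a p-regular partition λ of n to the partition obtained by replacing each part λ_i = p^{a_i}·q_i (with q_i not divisible by p) by p^{a_i} copies of q_i, is a bijection from the set P^{r(p)}(n) of p-regular partitions of n onto the set P^{c(p)}(n) of p-class regular partitions of n. -/
/-!
Write every positive integer uniquely as `p ^ a * q` with `p ∤ q`. The multiplicity of `q` in the
Glaisher image of `λ` is `∑ a, p ^ a * m_{p ^ a * q}(λ)`, and when `λ` is `p`-regular the
multiplicities `m_{p ^ a * q}(λ) < p` are exactly the base-`p` digits of that number. So the inverse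
map gives `p ^ a * q` the `a`-th base-`p` digit of `m_q` as multiplicity, and both composites are the
identity by uniqueness of base-`p` expansions.
-/

open Finset

namespace Nat

theorem factorization_pow_mul_of_not_dvd {p q : ℕ} (hp : p.Prime) (hq : ¬p ∣ q) (a : ℕ) :
    (p ^ a * q).factorization p = a := by
  have hq0 : q ≠ 0 := by rintro rfl; exact hq (dvd_zero p)
  simp [Nat.factorization_mul (pow_ne_zero a hp.ne_zero) hq0, hp.factorization_pow,
    Nat.factorization_eq_zero_of_not_dvd hq]

theorem ordProj_pow_mul_of_not_dvd {p q : ℕ} (hp : p.Prime) (hq : ¬p ∣ q) (a : ℕ) :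
    ordProj[p] (p ^ a * q) = p ^ a := by
  rw [factorization_pow_mul_of_not_dvd hp hq]

theorem sum_range_pow_mul_div_pow_mod (p m K : ℕ) :
    ∑ a ∈ range K, p ^ a * (m / p ^ a % p) = m % p ^ K := by
  induction K with
  | zero => simp [Nat.mod_one]
  | succ K ih => rw [sum_range_succ, ih, Nat.mod_pow_succ]

theorem sum_range_pow_mul_div_pow_mod_of_lt {p K b : ℕ} {c : ℕ → ℕ} (hc : ∀ a < K, c a < p)
    (hb : b < K) : (∑ a ∈ range K, p ^ a * c a) / p ^ b % p = c b := by
  induction K generalizing b c with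
  | zero => omega
  | succ K ih =>
    have hc0 : c 0 < p := hc 0 (by omega)
    have hshift : ∑ a ∈ range (K + 1), p ^ a * c a =
        c 0 + p * ∑ a ∈ range K, p ^ a * c (a + 1) := by
      rw [sum_range_succ', mul_sum, add_comm]
      simp only [pow_succ', mul_assoc, pow_zero, one_mul]
    rw [hshift]
    rcases b with _ | b
    · rw [pow_zero, Nat.div_one, Nat.add_mul_mod_self_left, Nat.mod_eq_of_lt hc0]
    · rw [pow_succ', ← Nat.div_div_eq_div_mul, Nat.add_mul_div_left _ _ (by omega),
        Nat.div_eq_of_lt hc0, zero_add]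
      exact ih (fun a ha => hc (a + 1) (by omega)) (by omega)

end Nat

theorem Multiset.count_mul_le_sum (s : Multiset ℕ) (y : ℕ) : s.count y * y ≤ s.sum := by
  obtain ⟨u, hu⟩ := Multiset.le_iff_exists_add.mp
    (Multiset.le_count_iff_replicate_le (a := y) (s := s).mp le_rfl)
  calc s.count y * y = (Multiset.replicate (s.count y) y).sum := by simp
    _ ≤ (Multiset.replicate (s.count y) y + u).sum := by
      rw [Multiset.sum_add]; exact Nat.le_add_right _ _
    _ = s.sum := congrArg Multiset.sum hu.symm

theorem sum_glaisher (p : ℕ) (s : Multiset ℕ) : (glaisher p s).sum = s.sum := by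
  simp only [glaisher, Multiset.sum_bind, Multiset.sum_replicate, smul_eq_mul,
    Nat.ordProj_mul_ordCompl_eq_self, Multiset.map_id']

theorem exists_ordCompl_eq_of_mem_glaisher {p y : ℕ} {s : Multiset ℕ} (hy : y ∈ glaisher p s) :
    ∃ x ∈ s, ordCompl[p] x = y := by
  obtain ⟨x, hx, hyx⟩ := Multiset.mem_bind.mp hy
  exact ⟨x, hx, (Multiset.eq_of_mem_replicate hyx).symm⟩

theorem pos_of_mem_glaisher {p y : ℕ} {s : Multiset ℕ} (hs : ∀ x ∈ s, 0 < x)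
    (hy : y ∈ glaisher p s) : 0 < y := by
  obtain ⟨x, hx, rfl⟩ := exists_ordCompl_eq_of_mem_glaisher hy
  exact Nat.ordCompl_pos p (hs x hx).ne'

theorem not_dvd_of_mem_glaisher {p y : ℕ} (hp : p.Prime) {s : Multiset ℕ} (hs : ∀ x ∈ s, 0 < x)
    (hy : y ∈ glaisher p s) : ¬p ∣ y := by
  obtain ⟨x, hx, rfl⟩ := exists_ordCompl_eq_of_mem_glaisher hy
  exact Nat.not_dvd_ordCompl hp (hs x hx).ne'

theorem count_replicate_ordCompl {p q x K : ℕ} (hp : p.Prime) (hq : ¬p ∣ q) (hx : x < p ^ K) :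
    (Multiset.replicate (ordProj[p] x) (ordCompl[p] x)).count q =
      ∑ a ∈ range K, p ^ a * ({x} : Multiset ℕ).count (p ^ a * q) := by
  have hpow : ∀ a, p ^ a * q = x → a = x.factorization p ∧ ordCompl[p] x = q := by
    rintro a rfl
    exact ⟨(Nat.factorization_pow_mul_of_not_dvd hp hq a).symm,
      Nat.ordCompl_pow_mul_of_not_dvd a hp hq⟩
  simp only [Multiset.count_replicate, Multiset.count_singleton, mul_ite, mul_one, mul_zero]
  by_cases hqx : ordCompl[p] x = q
  · have hx0 : x ≠ 0 := by rintro rfl; rw [Nat.zero_div] at hqx; exact hq (hqx ▸ dvd_zero p)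
    have hvK : x.factorization p < K :=
      (Nat.pow_lt_pow_iff_right hp.one_lt).mp ((Nat.ordProj_le p hx0).trans_lt hx)
    rw [if_pos hqx, sum_eq_single_of_mem _ (mem_range.mpr hvK) fun a _ ha =>
      if_neg fun h => ha (hpow a h).1, if_pos (by rw [← hqx, Nat.ordProj_mul_ordCompl_eq_self])]
  · rw [if_neg hqx]
    exact (sum_eq_zero fun a _ => if_neg fun h => hqx (hpow a h).2).symm

theorem count_glaisher {p q K : ℕ} (hp : p.Prime) (hq : ¬p ∣ q) {s : Multiset ℕ}
    (hs : ∀ x ∈ s, x < p ^ K) :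
    (glaisher p s).count q = ∑ a ∈ range K, p ^ a * s.count (p ^ a * q) := by
  induction s using Multiset.induction with
  | empty => simp [glaisher]
  | cons x s ih =>
    rw [glaisher, Multiset.cons_bind, Multiset.count_add, ← glaisher,
      count_replicate_ordCompl hp hq (hs x (Multiset.mem_cons_self x s)),
      ih fun y hy => hs y (Multiset.mem_cons_of_mem hy), ← sum_add_distrib,
      ← Multiset.singleton_add]
    simp only [Multiset.count_add, mul_add]

/-- Inverse of the `p`-Glaisher map: the part `p ^ a * q` (with `p ∤ q`) gets multiplicity equal to
the `a`-th base-`p` digit of `m_q(t)`. Parts larger than `t.sum` have digit `0`, so the range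
`x ≤ t.sum` is enough. -/
def glaisherInv (p : ℕ) (t : Multiset ℕ) : Multiset ℕ :=
  ∑ x ∈ range (t.sum + 1), Multiset.replicate (t.count (ordCompl[p] x) / ordProj[p] x % p) x

theorem count_glaisherInv (p : ℕ) (t : Multiset ℕ) (x : ℕ) :
    (glaisherInv p t).count x = t.count (ordCompl[p] x) / ordProj[p] x % p := by
  simp only [glaisherInv, Multiset.count_sum', Multiset.count_replicate, sum_ite_eq']
  split_ifs with hx
  · rfl
  rw [Nat.div_eq_of_lt, Nat.zero_mod]
  by_contra! h
  refine hx (mem_range.mpr (Nat.lt_succ_of_le ?_))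
  calc x = ordProj[p] x * ordCompl[p] x := (Nat.ordProj_mul_ordCompl_eq_self x p).symm
    _ ≤ t.count (ordCompl[p] x) * ordCompl[p] x := Nat.mul_le_mul_right _ h
    _ ≤ t.sum := t.count_mul_le_sum _

theorem pos_of_mem_glaisherInv {p x : ℕ} {t : Multiset ℕ} (ht : ∀ y ∈ t, 0 < y)
    (hx : x ∈ glaisherInv p t) : 0 < x := by
  refine Nat.pos_of_ne_zero ?_
  rintro rfl
  have h0 := Multiset.count_pos.mpr hx
  simp [count_glaisherInv, Multiset.count_eq_zero_of_notMem fun h => (ht 0 h).false] at h0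

theorem le_sum_of_mem_glaisherInv {p x : ℕ} {t : Multiset ℕ} (hx : x ∈ glaisherInv p t) :
    x ≤ t.sum := by
  obtain ⟨y, hy, hxy⟩ := Multiset.mem_sum.mp hx
  rw [Multiset.eq_of_mem_replicate hxy]
  exact Nat.lt_succ_iff.mp (mem_range.mp hy)

theorem glaisher_glaisherInv {p : ℕ} (hp : p.Prime) {t : Multiset ℕ} (ht : ∀ x ∈ t, ¬p ∣ x) :
    glaisher p (glaisherInv p t) = t := by
  have hpos : ∀ x ∈ glaisherInv p t, 0 < x := fun x => pos_of_mem_glaisherInv fun y hy =>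
    Nat.pos_of_ne_zero fun h0 => ht y hy (h0 ▸ dvd_zero p)
  ext q
  by_cases hq : p ∣ q
  · rw [Multiset.count_eq_zero_of_notMem fun h => not_dvd_of_mem_glaisher hp hpos h hq,
      Multiset.count_eq_zero_of_notMem fun h => ht q h hq]
  have hK : ∀ x ∈ glaisherInv p t, x < p ^ t.sum := fun x hx =>
    (le_sum_of_mem_glaisherInv hx).trans_lt (Nat.lt_pow_self hp.one_lt)
  have hq0 : q ≠ 0 := by rintro rfl; exact hq (dvd_zero p)
  rw [count_glaisher hp hq hK]
  simp only [count_glaisherInv, Nat.ordCompl_pow_mul_of_not_dvd _ hp hq]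
  simp only [Nat.ordProj_pow_mul_of_not_dvd hp hq]
  rw [Nat.sum_range_pow_mul_div_pow_mod]
  refine Nat.mod_eq_of_lt ((?_ : t.count q ≤ t.sum).trans_lt (Nat.lt_pow_self hp.one_lt))
  exact (Nat.le_mul_of_pos_right _ (Nat.pos_of_ne_zero hq0)).trans (t.count_mul_le_sum q)

theorem glaisherInv_glaisher {p : ℕ} (hp : p.Prime) {s : Multiset ℕ} (hs : ∀ x ∈ s, 0 < x)
    (hreg : ∀ i, s.count i < p) : glaisherInv p (glaisher p s) = s := by
  ext x
  rw [count_glaisherInv]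
  rcases Nat.eq_zero_or_pos x with rfl | hx
  · rw [Multiset.count_eq_zero_of_notMem fun h => (hs 0 h).false]
    simp [Multiset.count_eq_zero_of_notMem fun h => (pos_of_mem_glaisher hs h).false]
  have hK : ∀ y ∈ s, y < p ^ (x + s.sum) := fun y hy =>
    (Multiset.le_sum_of_mem hy).trans_lt ((Nat.lt_pow_self hp.one_lt).trans_le
      (Nat.pow_le_pow_right hp.pos (Nat.le_add_left _ _)))
  have hvK : x.factorization p < x + s.sum :=
    (Nat.factorization_lt p hx.ne').trans_le (Nat.le_add_right _ _)
  rw [count_glaisher hp (Nat.not_dvd_ordCompl hp hx.ne') hK,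
    Nat.sum_range_pow_mul_div_pow_mod_of_lt (fun a _ => hreg _) hvK,
    Nat.ordProj_mul_ordCompl_eq_self]

/-- The `p`-Glaisher map is a bijection from `p`-regular partitions of `n` onto
`p`-class regular partitions of `n`. -/
theorem stmt14 (p : ℕ) (hp : p.Prime) (n : ℕ) :
    Set.BijOn (glaisher p) {s : Multiset ℕ | IsPartitionOf n s ∧ ∀ i, s.count i < p}
      {s : Multiset ℕ | IsPartitionOf n s ∧ ∀ x ∈ s, ¬ p ∣ x} := by
  refine Set.InvOn.bijOn (f' := glaisherInv p)
    ⟨fun s hs => glaisherInv_glaisher hp hs.1.1 hs.2, fun t ht => glaisher_glaisherInv hp ht.2⟩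
    ?_ ?_
  · rintro s ⟨⟨hs, rfl⟩, -⟩
    exact ⟨⟨fun y => pos_of_mem_glaisher hs, sum_glaisher p s⟩,
      fun y => not_dvd_of_mem_glaisher hp hs⟩
  · rintro t ⟨⟨htpos, rfl⟩, ht⟩
    refine ⟨⟨fun x => pos_of_mem_glaisherInv htpos, ?_⟩,
      fun x => (count_glaisherInv p t x).trans_lt (Nat.mod_lt _ hp.pos)⟩
    conv_rhs => rw [← glaisher_glaisherInv hp ht, sum_glaisher]
end

section
/- For every natural number n, Σ_{λ ∈ P(n)} (ℓ(λ^o) + ℓ(λ^e) − ℓ(λ^r)) = Σ_{λ ∈ P(n)} (ℓ((λ^r)~) − ℓ(λ^r) + ℓ(λ^e)), equivalently Σ_{λ ∈ P(n)} ℓ(λ^o) = Σ_{λ ∈ P(n)} ℓ((λ^r)~); both sides equal Σ_{λ ∈ P(n)} 2·ℓ(λ^d). The sums run over all partitions λ of n and (λ^r)~ denotes the 2-Glaisher image of λ^r. -/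
/-!
The map `λ ↦ (λ^r)~ ∪ 2λ^d` is a bijection of `P(n)`. Its odd parts are `(λ^r)~` and
its halved even parts are `λ^d`; and `λ` is recovered from `λ^r` and `λ^d`, because
`m_i(λ) = m_i(λ^r) + 2 m_i(λ^d)` and the 2-Glaisher map is injective on strict partitions:
the multiplicity of an odd `q` in `μ̃` is `∑ 2^a` over the `a` with `2^a q ∈ μ`, and a binary
expansion determines its exponents. Transporting `ℓ(λ^o)` along this bijection gives
`∑ ℓ(λ^o) = ∑ ℓ((λ^r)~)`; the other two identities then follow from
`ℓ(λ^o) + ℓ(λ^e) = ℓ(λ) = ℓ(λ^r) + 2 ℓ(λ^d)`.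
-/
lemma Nat.eq_of_factorization_eq_of_ordCompl_eq {p x y : ℕ}
    (h₁ : x.factorization p = y.factorization p) (h₂ : ordCompl[p] x = ordCompl[p] y) : x = y := by
  rw [← ordProj_mul_ordCompl_eq_self x p, ← ordProj_mul_ordCompl_eq_self y p, h₂, h₁]

namespace Multiset

lemma count_rPart (s : Multiset ℕ) (i : ℕ) : (rPart s).count i = s.count i % 2 := by
  rw [rPart, count_filter]
  by_cases h : Odd (s.count i)
  · have hi : i ∈ s := count_pos.mp h.pos
    simp [h, hi, Nat.odd_iff.mp h]
  · simp [h, Nat.even_iff.mp (Nat.not_odd_iff_even.mp h)]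

lemma count_dPart (s : Multiset ℕ) (i : ℕ) : (dPart s).count i = s.count i / 2 := by
  rw [dPart, count_sum', Finset.sum_eq_single i]
  · simp
  · intro j _ hj
    simp [count_replicate, hj]
  · intro hi
    simp [count_eq_zero.mpr (mt mem_toFinset.mpr hi)]

lemma rPart_add_dPart_add_dPart (s : Multiset ℕ) : rPart s + dPart s + dPart s = s := by
  ext i
  simp only [count_add, count_rPart, count_dPart]
  omega

lemma rPart_le (s : Multiset ℕ) : rPart s ≤ s :=
  le_iff_count.mpr fun i => (count_rPart s i).trans_le (Nat.mod_le _ _)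

lemma dPart_le (s : Multiset ℕ) : dPart s ≤ s :=
  le_iff_count.mpr fun i => (count_dPart s i).trans_le (Nat.div_le_self _ _)

lemma nodup_rPart (s : Multiset ℕ) : (rPart s).Nodup :=
  (nodup_dedup s).filter _

lemma card_rPart_add_two_mul_card_dPart (s : Multiset ℕ) :
    (rPart s).card + 2 * (dPart s).card = card s := by
  conv_rhs => rw [← rPart_add_dPart_add_dPart s]
  simp only [card_add]
  ring

lemma card_oPart_add_card_ePart (s : Multiset ℕ) : (oPart s).card + (ePart s).card = card s := by
  rw [oPart, ePart, card_map, ← card_add]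
  conv_rhs => rw [← filter_add_not (fun x => Odd x) s]
  simp only [Nat.not_odd_iff_even]

lemma sum_glaisher (p : ℕ) (s : Multiset ℕ) : (glaisher p s).sum = s.sum := by
  simp only [glaisher, sum_bind, sum_replicate, smul_eq_mul, Nat.ordProj_mul_ordCompl_eq_self,
    map_id']

lemma pos_and_not_dvd_of_mem_glaisher {p : ℕ} (hp : p.Prime) {s : Multiset ℕ}
    (hs : ∀ x ∈ s, 0 < x) {y : ℕ} (hy : y ∈ glaisher p s) : 0 < y ∧ ¬p ∣ y := by
  obtain ⟨x, hx, hyx⟩ := mem_bind.mp hy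
  rw [eq_of_mem_replicate hyx]
  exact ⟨Nat.ordCompl_pos p (hs x hx).ne', Nat.not_dvd_ordCompl hp (hs x hx).ne'⟩

def glaisherExponents (p : ℕ) (s : Multiset ℕ) (q : ℕ) : Finset ℕ :=
  (s.toFinset.filter (ordCompl[p] · = q)).image (·.factorization p)

lemma mem_iff_factorization_mem_glaisherExponents {p : ℕ} {s : Multiset ℕ} (x : ℕ) :
    x ∈ s ↔ x.factorization p ∈ glaisherExponents p s (ordCompl[p] x) := by
  simp only [glaisherExponents, Finset.mem_image, Finset.mem_filter, mem_toFinset]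
  refine ⟨fun hx => ⟨x, ⟨hx, rfl⟩, rfl⟩, ?_⟩
  rintro ⟨y, ⟨hy, hcompl⟩, hfact⟩
  rwa [← Nat.eq_of_factorization_eq_of_ordCompl_eq hfact hcompl]

lemma count_glaisher_of_nodup (p : ℕ) {s : Multiset ℕ} (hs : s.Nodup) (q : ℕ) :
    (glaisher p s).count q = ∑ a ∈ glaisherExponents p s q, p ^ a := by
  rw [glaisherExponents, Finset.sum_image, Finset.sum_filter, Finset.sum, toFinset_val, hs.dedup,
    glaisher, count_bind]
  · simp only [count_replicate]
  · intro x hx y hy hfact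
    exact Nat.eq_of_factorization_eq_of_ordCompl_eq hfact
      ((Finset.mem_filter.mp hx).2.trans (Finset.mem_filter.mp hy).2.symm)

lemma glaisher_injOn_nodup {p : ℕ} (hp : 2 ≤ p) : Set.InjOn (glaisher p) {s | s.Nodup} := by
  intro s hs t ht h
  have hexp (q : ℕ) : glaisherExponents p s q = glaisherExponents p t q :=
    Finset.geomSum_injective hp <| by
      simpa only [count_glaisher_of_nodup p hs, count_glaisher_of_nodup p ht] using
        congrArg (count q) h
  refine (Nodup.ext hs ht).mpr fun x => ?_
  rw [mem_iff_factorization_mem_glaisherExponents, mem_iff_factorization_mem_glaisherExponents,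
    hexp]

def glaisherRD (s : Multiset ℕ) : Multiset ℕ :=
  glaisher 2 (rPart s) + (dPart s).map (2 * ·)

section glaisherRD

variable {s : Multiset ℕ}

lemma odd_of_mem_glaisher_rPart (hs : ∀ x ∈ s, 0 < x) {y : ℕ} (hy : y ∈ glaisher 2 (rPart s)) :
    Odd y :=
  Nat.odd_iff.mpr <| Nat.two_dvd_ne_zero.mp <| (pos_and_not_dvd_of_mem_glaisher Nat.prime_two
    (fun x hx => hs x (mem_of_le (rPart_le s) hx)) hy).2

lemma oPart_glaisherRD (hs : ∀ x ∈ s, 0 < x) : oPart (glaisherRD s) = glaisher 2 (rPart s) := by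
  rw [glaisherRD, oPart, filter_add, filter_eq_self.mpr fun y hy => odd_of_mem_glaisher_rPart hs hy,
    filter_map, filter_eq_nil.mpr fun x _ => by simp, map_zero, add_zero]

lemma ePart_glaisherRD (hs : ∀ x ∈ s, 0 < x) : ePart (glaisherRD s) = dPart s := by
  rw [glaisherRD, ePart, filter_add,
    filter_eq_nil.mpr fun y hy => Nat.not_even_iff_odd.mpr (odd_of_mem_glaisher_rPart hs hy),
    filter_eq_self.mpr fun y hy => ?_, zero_add, map_map]
  · simp
  · obtain ⟨x, _, rfl⟩ := mem_map.mp hy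
    exact even_two_mul x

lemma pos_of_mem_glaisherRD (hs : ∀ x ∈ s, 0 < x) {y : ℕ} (hy : y ∈ glaisherRD s) : 0 < y := by
  rcases mem_add.mp hy with hy | hy
  · exact (pos_and_not_dvd_of_mem_glaisher Nat.prime_two
      (fun x hx => hs x (mem_of_le (rPart_le s) hx)) hy).1
  · obtain ⟨x, hx, rfl⟩ := mem_map.mp hy
    have := hs x (mem_of_le (dPart_le s) hx)
    omega

end glaisherRD

lemma sum_glaisherRD (s : Multiset ℕ) : (glaisherRD s).sum = s.sum := by
  conv_rhs => rw [← rPart_add_dPart_add_dPart s]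
  rw [glaisherRD, sum_add, sum_glaisher, sum_map_mul_left (f := fun x => x), map_id', sum_add,
    sum_add]
  ring

lemma glaisherRD_injOn_pos : Set.InjOn glaisherRD {s | ∀ x ∈ s, 0 < x} := by
  intro s hs t ht h
  have hd : dPart s = dPart t := by rw [← ePart_glaisherRD hs, ← ePart_glaisherRD ht, h]
  have hr : rPart s = rPart t :=
    glaisher_injOn_nodup le_rfl (nodup_rPart s) (nodup_rPart t) <| by
      rw [← oPart_glaisherRD hs, ← oPart_glaisherRD ht, h]
  rw [← rPart_add_dPart_add_dPart s, ← rPart_add_dPart_add_dPart t, hr, hd]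

end Multiset

namespace Nat.Partition

open Multiset

def glaisherRD {n : ℕ} (μ : Nat.Partition n) : Nat.Partition n where
  parts := Multiset.glaisherRD μ.parts
  parts_pos := pos_of_mem_glaisherRD fun _ => μ.parts_pos
  parts_sum := (sum_glaisherRD _).trans μ.parts_sum

lemma glaisherRD_bijective (n : ℕ) : Function.Bijective (glaisherRD (n := n)) :=
  Finite.injective_iff_bijective.mp fun μ ν h => Nat.Partition.ext <|
    glaisherRD_injOn_pos (fun _ => μ.parts_pos) (fun _ => ν.parts_pos) (congrArg parts h)

lemma sum_card_oPart_eq_sum_card_glaisher_rPart (n : ℕ) :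
    ∑ μ : Nat.Partition n, (oPart μ.parts).card =
      ∑ μ : Nat.Partition n, (glaisher 2 (rPart μ.parts)).card :=
  (Fintype.sum_bijective glaisherRD (glaisherRD_bijective n) _ _ fun μ =>
    congrArg card (oPart_glaisherRD (fun _ => μ.parts_pos)).symm).symm

end Nat.Partition

/-- `Σ_{λ ∈ P(n)} (ℓ(λ^o) + ℓ(λ^e) − ℓ(λ^r)) = Σ_{λ ∈ P(n)} (ℓ((λ^r)~) − ℓ(λ^r) + ℓ(λ^e))`,
equivalently `Σ_{λ ∈ P(n)} ℓ(λ^o) = Σ_{λ ∈ P(n)} ℓ((λ^r)~)`, and both sides equal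
`Σ_{λ ∈ P(n)} 2 ℓ(λ^d)`. -/
theorem stmt18 (n : ℕ) :
    (∑ μ : Nat.Partition n,
        (((oPart μ.parts).card : ℤ) + ((ePart μ.parts).card : ℤ) - ((rPart μ.parts).card : ℤ)) =
      ∑ μ : Nat.Partition n,
        (((glaisher 2 (rPart μ.parts)).card : ℤ) - ((rPart μ.parts).card : ℤ)
          + ((ePart μ.parts).card : ℤ))) ∧
    (∑ μ : Nat.Partition n, (oPart μ.parts).card =
      ∑ μ : Nat.Partition n, (glaisher 2 (rPart μ.parts)).card) ∧
    (∑ μ : Nat.Partition n,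
        (((oPart μ.parts).card : ℤ) + ((ePart μ.parts).card : ℤ) - ((rPart μ.parts).card : ℤ)) =
      ∑ μ : Nat.Partition n, (2 * ((dPart μ.parts).card : ℤ))) := by
  have hodd := Nat.Partition.sum_card_oPart_eq_sum_card_glaisher_rPart n
  have hoddℤ : ∑ μ : Nat.Partition n, ((oPart μ.parts).card : ℤ) =
      ∑ μ : Nat.Partition n, ((glaisher 2 (rPart μ.parts)).card : ℤ) := by
    exact_mod_cast hodd
  refine ⟨?_, hodd, ?_⟩
  · simp only [Finset.sum_add_distrib, Finset.sum_sub_distrib, hoddℤ]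
    ring
  · refine Fintype.sum_congr _ _ fun μ => ?_
    have hoe := Multiset.card_oPart_add_card_ePart μ.parts
    have hrd := Multiset.card_rPart_add_two_mul_card_dPart μ.parts
    omega
end
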